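/- arXiv:hep-th/0303051 — 5 statements merged into one kernel-verified Lean document; each statement's English description precedes it below -/
import Mathlib

section
/- Let V be a vector space over a field k equipped with an internal direct sum decomposition V = ⨁_{i∈ℤ} V_i in which only finitely many V_i are nonzero (a bounded filtration). Let Q : V → V be a linear map with Q ∘ Q = 0 which decomposes as a finite sum Q = Q_0 + Q_1 + ⋯ + Q_N, where each component Q_m maps V_i into V_{i+m} for every i (so every component has non-negative filtration degree). Then Q_0 ∘ Q_0 = 0, and if the Q_0-cohomology is trivial, i.e. ker Q_0 = im Q_0, then the Q-cohomology is trivial as well: ker Q = im Q. -/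
open DirectSum

section Aux

variable {k V : Type*} [Field k] [AddCommGroup V] [Module k V]
variable (Vg : ℤ → Submodule k V) [DirectSum.Decomposition Vg]

noncomputable def fl_proj (i : ℤ) : V →ₗ[k] V :=
  (Vg i).subtype ∘ₗ (DirectSum.component k ℤ (fun i => ↥(Vg i)) i) ∘ₗ
    (decomposeLinearEquiv Vg).toLinearMap

lemma fl_proj_apply (i : ℤ) (x : V) : fl_proj Vg i x = (decompose Vg x i : V) := rfl

lemma fl_proj_mem (i : ℤ) (x : V) : fl_proj Vg i x ∈ Vg i := (decompose Vg x i).2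

lemma fl_proj_same {i : ℤ} {x : V} (hx : x ∈ Vg i) : fl_proj Vg i x = x :=
  decompose_of_mem_same Vg hx

lemma fl_proj_ne {i j : ℤ} {x : V} (hx : x ∈ Vg j) (h : j ≠ i) : fl_proj Vg i x = 0 := by
  rw [fl_proj_apply, decompose_of_mem_ne Vg hx h]

lemma fl_eq_zero {x : V} (h : ∀ i, fl_proj Vg i x = 0) : x = 0 := by
  classical
  rw [← DirectSum.sum_support_decompose Vg x]
  exact Finset.sum_eq_zero fun i _ => h i

lemma fl_proj_comm (Qm : V →ₗ[k] V) (m : ℤ)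
    (hQm : ∀ i : ℤ, ∀ x ∈ Vg i, Qm x ∈ Vg (i + m)) (j : ℤ) (x : V) :
    fl_proj Vg j (Qm x) = Qm (fl_proj Vg (j - m) x) := by
  classical
  conv_lhs => rw [← DirectSum.sum_support_decompose Vg x]
  rw [map_sum, map_sum]
  rw [Finset.sum_eq_single (j - m)]
  · rw [← fl_proj_apply]
    exact fl_proj_same Vg (by simpa using hQm _ _ (fl_proj_mem Vg (j - m) x))
  · intro i _ hi
    exact fl_proj_ne Vg (hQm i _ (decompose Vg x i).2) (by omega)
  · intro h
    have hz : (decompose Vg x (j - m) : V) = 0 := by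
      rw [DFinsupp.notMem_support_iff.mp h]; rfl
    rw [hz, map_zero, map_zero]

end Aux

/-- The abstract filtration lemma: if a differential `Q` on a vector space `V` with a
bounded `ℤ`-grading decomposes into finitely many components `Q_0 + Q_1 + ⋯ + Q_N` of
non-negative filtration degree, then `Q_0` is a differential, and triviality of the
`Q_0`-cohomology implies triviality of the `Q`-cohomology. -/
theorem filtration_lemma {k V : Type*} [Field k] [AddCommGroup V] [Module k V]
    (Vg : ℤ → Submodule k V) (hinternal : DirectSum.IsInternal Vg)
    (hbounded : {i : ℤ | Vg i ≠ ⊥}.Finite)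
    (N : ℕ) (Qc : ℕ → (V →ₗ[k] V)) (Q : V →ₗ[k] V)
    (hdecomp : Q = ∑ m ∈ Finset.range (N + 1), Qc m)
    (hdeg : ∀ m ∈ Finset.range (N + 1), ∀ i : ℤ,
      (Vg i).map (Qc m) ≤ Vg (i + (m : ℤ)))
    (hQ2 : Q ∘ₗ Q = 0) :
    Qc 0 ∘ₗ Qc 0 = 0 ∧
      (LinearMap.ker (Qc 0) = LinearMap.range (Qc 0) →
        LinearMap.ker Q = LinearMap.range Q) := by
  letI := hinternal.chooseDecomposition
  set π := fl_proj Vg with hπ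
  have hdeg' : ∀ m ∈ Finset.range (N + 1), ∀ i : ℤ, ∀ x ∈ Vg i, Qc m x ∈ Vg (i + (m : ℤ)) :=
    fun m hm i x hx => hdeg m hm i (Submodule.mem_map_of_mem hx)
  have hswap : ∀ m ∈ Finset.range (N + 1), ∀ j : ℤ, ∀ x : V,
      π j (Qc m x) = Qc m (π (j - m) x) :=
    fun m hm j x => fl_proj_comm Vg (Qc m) m (hdeg' m hm) j x
  have hQzero : ∀ x : V, Q (Q x) = 0 := fun x => by
    have := congrFun (congrArg DFunLike.coe hQ2) x
    simpa using this
  have hprojQ : ∀ j : ℤ, ∀ x : V,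
      π j (Q x) = ∑ m ∈ Finset.range (N + 1), Qc m (π (j - m) x) := by
    intro j x
    rw [hdecomp, LinearMap.sum_apply, map_sum]
    exact Finset.sum_congr rfl fun m hm => hswap m hm j x
  -- Part 1
  have hQ02 : ∀ i : ℤ, ∀ x ∈ Vg i, Qc 0 (Qc 0 x) = 0 := by
    intro i x hx
    have h0 : π i (Q (Q x)) = 0 := by rw [hQzero x, map_zero]
    rw [hprojQ] at h0
    have hinner : ∀ m ∈ Finset.range (N + 1),
        Qc m (π (i - m) (Q x)) = if m = 0 then Qc 0 (Qc 0 x) else 0 := by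
      intro m hm
      rw [hprojQ]
      by_cases hm0 : m = 0
      · subst hm0
        simp only [if_pos rfl]
        congr 1
        rw [Finset.sum_eq_single 0]
        · rw [show i - (0:ℕ) - (0:ℕ) = i by push_cast; ring, fl_proj_same Vg hx]
        · intro n _ hn
          rw [fl_proj_ne Vg hx (by omega), map_zero]
        · intro h; exact absurd (Finset.mem_range.mpr (Nat.succ_pos N)) h
      · rw [if_neg hm0]
        have : ∀ n ∈ Finset.range (N + 1), Qc n (π (i - m - n) x) = 0 := by
          intro n _
          rw [fl_proj_ne Vg hx (by omega), map_zero]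
        rw [Finset.sum_congr rfl this, Finset.sum_const_zero, map_zero]
    rw [Finset.sum_congr rfl hinner, Finset.sum_ite_eq' _ 0 _] at h0
    simpa using h0
  have part1 : Qc 0 ∘ₗ Qc 0 = 0 := by
    have hker : ⨆ i, Vg i ≤ LinearMap.ker (Qc 0 ∘ₗ Qc 0) := by
      refine iSup_le fun i x hx => ?_
      rw [LinearMap.mem_ker, LinearMap.comp_apply]
      exact hQ02 i x hx
    rw [hinternal.submodule_iSup_eq_top, top_le_iff] at hker
    exact LinearMap.ker_eq_top.mp hker
  refine ⟨part1, fun hc => ?_⟩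
  -- Part 2
  obtain ⟨b, hb⟩ := hbounded.bddAbove
  have hbot : ∀ i : ℤ, b < i → Vg i = ⊥ := by
    intro i hi
    by_contra h
    exact absurd (hb h) (by omega)
  -- filtration membership predicate
  have key : ∀ n : ℕ, ∀ v : V, (∀ j : ℤ, j < b + 1 - n → π j v = 0) → Q v = 0 →
      ∃ w, Q w = v := by
    intro n
    induction n with
    | zero =>
      intro v hv _
      have hv0 : v = 0 := by
        apply fl_eq_zero Vg
        intro j
        by_cases hj : j < b + 1 - (0:ℕ)
        · exact hv j hj
        · have hbj : Vg j = ⊥ := hbot j (by push_cast at hj ⊢; omega)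
          have hm := fl_proj_mem Vg j v
          rw [hbj] at hm
          simpa using hm
      exact ⟨0, by rw [map_zero, hv0]⟩
    | succ n ih =>
      intro v hv hQv
      set p : ℤ := b + 1 - (n + 1 : ℕ) with hp
      -- Qc 0 kills π p v
      have hker0 : Qc 0 (π p v) = 0 := by
        have h0 : π p (Q v) = 0 := by rw [hQv, map_zero]
        rw [hprojQ] at h0
        rw [Finset.sum_eq_single 0] at h0
        · rw [Nat.cast_zero, sub_zero] at h0; exact h0
        · intro m _ hm
          rw [hv (p - m) (by push_cast at hp ⊢; omega), map_zero]
        · intro h; exact absurd (Finset.mem_range.mpr (Nat.succ_pos N)) h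
      obtain ⟨w0, hw0⟩ : π p v ∈ LinearMap.range (Qc 0) := hc ▸ (LinearMap.mem_ker.mpr hker0)
      set w' := π p w0 with hw'
      have hw'mem : w' ∈ Vg p := fl_proj_mem Vg p w0
      have hQ0w' : Qc 0 w' = π p v := by
        have := hswap 0 (Finset.mem_range.mpr (Nat.succ_pos N)) p w0
        rw [hw0] at this
        have hpp : π p (π p v) = π p v := fl_proj_same Vg (fl_proj_mem Vg p v)
        rw [hpp, Nat.cast_zero, sub_zero] at this
        exact this.symm
      set v' := v - Q w' with hv'
      have hv'mem : ∀ j : ℤ, j < b + 1 - (n:ℕ) → π j v' = 0 := by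
        intro j hj
        have hQw'j : π j (Q w') = ∑ m ∈ Finset.range (N + 1), Qc m (π (j - m) w') :=
          hprojQ j w'
        by_cases hjp : j = p
        · subst hjp
          have : ∀ m ∈ Finset.range (N + 1), Qc m (π (p - m) w') =
              if m = 0 then π p v else 0 := by
            intro m hm
            by_cases hm0 : m = 0
            · subst hm0
              rw [if_pos rfl, show p - (0:ℕ) = p by push_cast; ring,
                fl_proj_same Vg hw'mem, hQ0w']
            · rw [if_neg hm0, fl_proj_ne Vg hw'mem (by omega), map_zero]
          rw [hv', map_sub, hQw'j, Finset.sum_congr rfl this,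
            Finset.sum_ite_eq' _ 0 _]
          simp
        · have hjlt : j < p := by push_cast at hp hj ⊢; omega
          have : ∀ m ∈ Finset.range (N + 1), Qc m (π (j - m) w') = 0 := by
            intro m _
            rw [fl_proj_ne Vg hw'mem (by omega), map_zero]
          rw [hv', map_sub, hQw'j, Finset.sum_congr rfl this, Finset.sum_const_zero,
            hv j hjlt, sub_zero]
      have hQv' : Q v' = 0 := by
        rw [hv', map_sub, hQv, hQzero, sub_zero]
      obtain ⟨w'', hw''⟩ := ih v' hv'mem hQv'
      exact ⟨w' + w'', by rw [map_add, hw'', hv']; abel⟩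
  -- conclude
  apply le_antisymm
  · intro v hv
    obtain ⟨a, ha⟩ := hbounded.bddBelow
    have habot : ∀ j : ℤ, j < a → Vg j = ⊥ := by
      intro j hj
      by_contra h
      exact absurd (ha h) (by omega)
    obtain ⟨w, hw⟩ := key (b + 1 - a).toNat v (fun j hj => by
      have hja : j < a := by
        have := Int.self_le_toNat (b + 1 - a)
        omega
      have := fl_proj_mem Vg j v
      rw [habot j hja] at this
      simpa using this) (LinearMap.mem_ker.mp hv)
    exact ⟨w, hw⟩
  · rintro _ ⟨x, rfl⟩
    exact LinearMap.mem_ker.mpr (hQzero x)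
end

section
/- Let M be an invertible n × n complex matrix and A a Hermitian n × n complex matrix. Then the 2n × 2n Hermitian matrix T = [[0, M], [M†, A]] is invertible and has exactly n positive eigenvalues and n negative eigenvalues; in particular its signature is zero. -/
open Matrix

lemma dot_conj {ι : Type*} [Fintype ι] (T C : Matrix ι ι ℂ) (y : ι → ℂ) :
    star (C *ᵥ y) ⬝ᵥ T *ᵥ (C *ᵥ y) = star y ⬝ᵥ (Cᴴ * T * C) *ᵥ y := by
  rw [star_mulVec, mulVec_mulVec, dotProduct_mulVec, vecMul_vecMul, dotProduct_mulVec,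
    mul_assoc]

lemma inertia_aux {ι : Type*} [Fintype ι] [DecidableEq ι] {T : Matrix ι ι ℂ}
    (hT : T.IsHermitian) (ε : ℝ) (W : Submodule ℂ (ι → ℂ))
    (hW : ∀ x ∈ W, star x ⬝ᵥ T *ᵥ x = 0) :
    (Finset.univ.filter fun i => 0 < ε * hT.eigenvalues i).card + Module.finrank ℂ W
      ≤ Fintype.card ι := by
  classical
  set U : Matrix ι ι ℂ := (hT.eigenvectorUnitary : Matrix ι ι ℂ) with hU
  set μ : ι → ℝ := hT.eigenvalues with hμ
  set χ : ι → ℂ := fun i => if 0 < ε * μ i then 1 else 0 with hχ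
  have hUU : star U * U = 1 := Unitary.coe_star_mul_self hT.eigenvectorUnitary
  have hUunit : IsUnit U := ⟨Unitary.toUnits hT.eigenvectorUnitary, rfl⟩
  have hUdet : IsUnit U.det := (Matrix.isUnit_iff_isUnit_det U).mp hUunit
  set V : Submodule ℂ (ι → ℂ) := LinearMap.range (U * diagonal χ).mulVecLin with hV
  -- finrank V = card of filter
  have hVrank : Module.finrank ℂ V = (Finset.univ.filter fun i => 0 < ε * μ i).card := by
    have h1 : Module.finrank ℂ V = (U * diagonal χ).rank := rfl
    rw [h1, rank_mul_eq_right_of_isUnit_det U (diagonal χ) hUdet, rank_diagonal,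
      Fintype.card_subtype]
    congr 1
    apply Finset.filter_congr
    intro i _
    simp only [hχ]
    constructor
    · intro h
      by_contra hc
      simp [hc] at h
    · intro h; simp [h]
  -- positivity on V
  have hpos : ∀ x ∈ V, x ≠ 0 → 0 < ε * (star x ⬝ᵥ T *ᵥ x).re := by
    intro x hx hx0
    obtain ⟨y, rfl⟩ := hx
    rw [mulVecLin_apply, ← mulVec_mulVec]
    set z : ι → ℂ := diagonal χ *ᵥ y with hz
    have hform : star (U *ᵥ z) ⬝ᵥ T *ᵥ (U *ᵥ z)
        = star z ⬝ᵥ (diagonal (RCLike.ofReal ∘ μ) *ᵥ z) := by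
      have hdiag : star U * T * U = diagonal (RCLike.ofReal ∘ μ) := by
        have := hT.conjStarAlgAut_star_eigenvectorUnitary
        rwa [Unitary.conjStarAlgAut_star_apply] at this
      rw [dot_conj, ← Matrix.star_eq_conjTranspose, hdiag]
    rw [hform]
    have : star z ⬝ᵥ (diagonal (RCLike.ofReal ∘ μ) *ᵥ z)
        = ((∑ i, μ i * Complex.normSq (z i) : ℝ) : ℂ) := by
      simp only [dotProduct, mulVec_diagonal, Function.comp_apply, Pi.star_apply]
      push_cast
      refine Finset.sum_congr rfl fun i _ => ?_
      rw [Complex.normSq_eq_conj_mul_self, Complex.star_def, mul_left_comm]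
      exact rfl
    rw [this, Complex.ofReal_re, Finset.mul_sum]
    have hzsupp : ∀ i, z i ≠ 0 → 0 < ε * μ i := by
      intro i hzi
      by_contra hc
      apply hzi
      rw [hz]
      simp [mulVec_diagonal, hχ, hc]
    have hz0 : z ≠ 0 := by
      intro h
      apply hx0
      rw [mulVecLin_apply, ← mulVec_mulVec, ← hz, h, mulVec_zero]
    obtain ⟨i, hi⟩ := Function.ne_iff.mp hz0
    apply Finset.sum_pos'
    · intro j _
      rcases eq_or_ne (z j) 0 with h | h
      · simp [h]
      · have h1 := hzsupp j h
        have h2 := Complex.normSq_nonneg (z j)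
        nlinarith
    · refine ⟨i, Finset.mem_univ i, ?_⟩
      have h1 := hzsupp i hi
      have h2 : 0 < Complex.normSq (z i) := by
        simpa [Complex.normSq_pos] using hi
      calc (0:ℝ) < (ε * μ i) * Complex.normSq (z i) := by positivity
        _ = ε * (μ i * Complex.normSq (z i)) := by ring
  -- disjointness
  have hdisj : Disjoint V W := by
    rw [Submodule.disjoint_def]
    intro x hxV hxW
    by_contra hx0
    have h1 := hpos x hxV hx0
    rw [hW x hxW] at h1
    simp at h1
  have := Submodule.finrank_add_finrank_le_of_disjoint hdisj
  rw [hVrank] at this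
  simpa [Module.finrank_fintype_fun_eq_card] using this

/-- The change of basis (transf2) of Step 2.2: for `M` invertible and `A` Hermitian, the
Hermitian matrix `[[0, M], [M†, A]]` is invertible and has exactly `n` positive and `n`
negative eigenvalues; in particular its signature is zero. -/
theorem doublet_block_signature_zero (n : ℕ)
    (M A : Matrix (Fin n) (Fin n) ℂ) (hM : IsUnit M) (hA : A.IsHermitian) :
    ∃ hT : (fromBlocks 0 M Mᴴ A).IsHermitian,
      IsUnit (fromBlocks 0 M Mᴴ A) ∧
        (Finset.univ.filter fun i => 0 < hT.eigenvalues i).card = n ∧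
        (Finset.univ.filter fun i => hT.eigenvalues i < 0).card = n ∧
        ((Finset.univ.filter fun i => 0 < hT.eigenvalues i).card : ℤ) -
            ((Finset.univ.filter fun i => hT.eigenvalues i < 0).card : ℤ) = 0 := by
  classical
  have hdM : IsUnit M.det := (Matrix.isUnit_iff_isUnit_det M).mp hM
  have hdMH : IsUnit Mᴴ.det := by rw [det_conjTranspose]; exact hdM.star
  set E : Matrix (Fin n) (Fin n) ℂ := (2:ℂ)⁻¹ • ((Mᴴ)⁻¹ * A) with hE
  set P : Matrix (Fin n ⊕ Fin n) (Fin n ⊕ Fin n) ℂ := fromBlocks 1 E 0 M with hP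
  set J : Matrix (Fin n ⊕ Fin n) (Fin n ⊕ Fin n) ℂ := fromBlocks 0 1 1 0 with hJ
  set Q : Matrix (Fin n ⊕ Fin n) (Fin n ⊕ Fin n) ℂ := fromBlocks 1 0 0 0 with hQ
  have hT : (fromBlocks 0 M Mᴴ A).IsHermitian :=
    isHermitian_fromBlocks_iff.mpr ⟨isHermitian_zero, rfl, conjTranspose_conjTranspose M, hA⟩
  set T : Matrix (Fin n ⊕ Fin n) (Fin n ⊕ Fin n) ℂ := fromBlocks 0 M Mᴴ A with hTdef
  -- the congruence T = Pᴴ J P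
  have hEH : Eᴴ = (2:ℂ)⁻¹ • (A * M⁻¹) := by
    rw [hE, conjTranspose_smul, conjTranspose_mul, conjTranspose_nonsing_inv,
      conjTranspose_conjTranspose, hA.eq]
    norm_num
  have hEHM : Eᴴ * M + Mᴴ * E = A := by
    rw [hEH, hE, smul_mul_assoc, mul_smul_comm, Matrix.mul_assoc, nonsing_inv_mul M hdM,
      Matrix.mul_one, ← Matrix.mul_assoc, mul_nonsing_inv Mᴴ hdMH, Matrix.one_mul, ← add_smul]
    norm_num
  have hPJP : Pᴴ * J * P = T := by
    rw [hP, hJ, hTdef, fromBlocks_conjTranspose, fromBlocks_multiply, fromBlocks_multiply]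
    simp only [conjTranspose_one, conjTranspose_zero, Matrix.mul_one, Matrix.one_mul,
      Matrix.mul_zero, Matrix.zero_mul, add_zero, zero_add]
    rw [add_comm (Mᴴ * E), hEHM]
  have hdP : IsUnit P.det := by
    rw [hP, det_fromBlocks_zero₂₁, det_one, one_mul]; exact hdM
  have hdPH : IsUnit Pᴴ.det := by rw [det_conjTranspose]; exact hdP.star
  have hJJ : J * J = 1 := by
    rw [hJ, fromBlocks_multiply]
    simp [fromBlocks_one]
  have hdJ : IsUnit J.det := IsUnit.of_mul_eq_one _ (by rw [← det_mul, hJJ, det_one])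
  have hUnitT : IsUnit T := by
    rw [Matrix.isUnit_iff_isUnit_det, ← hPJP, det_mul, det_mul]
    exact (hdPH.mul hdJ).mul hdP
  -- the isotropic subspace W of dimension n
  set W : Submodule ℂ (Fin n ⊕ Fin n → ℂ) := LinearMap.range (P⁻¹ * Q).mulVecLin with hW
  have hWrank : Module.finrank ℂ W = n := by
    have h1 : Module.finrank ℂ W = (P⁻¹ * Q).rank := rfl
    rw [h1, rank_mul_eq_right_of_isUnit_det _ _ (isUnit_nonsing_inv_det P hdP)]
    have h2 : Q = diagonal (Sum.elim (fun _ => (1:ℂ)) (fun _ => 0)) := by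
      rw [← fromBlocks_diagonal, diagonal_one, diagonal_zero]
    rw [h2, rank_diagonal]
    have e : {i : Fin n ⊕ Fin n // Sum.elim (fun _ => (1:ℂ)) (fun _ => 0) i ≠ 0} ≃ Fin n :=
      { toFun := fun x => match x with
          | ⟨Sum.inl a, _⟩ => a
          | ⟨Sum.inr b, h⟩ => absurd rfl h
        invFun := fun a => ⟨Sum.inl a, one_ne_zero⟩
        left_inv := by
          rintro ⟨x, h⟩
          cases x with
          | inl a => rfl
          | inr b => exact absurd rfl h
        right_inv := fun a => rfl }
    rw [Fintype.card_congr e, Fintype.card_fin]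
  have hQH : Qᴴ = Q := by
    rw [hQ, fromBlocks_conjTranspose]
    simp
  have hQJQ : Qᴴ * J * Q = 0 := by
    rw [hQH, hQ, hJ, fromBlocks_multiply, fromBlocks_multiply]
    simp
  have hWzero : ∀ x ∈ W, star x ⬝ᵥ T *ᵥ x = 0 := by
    rintro x ⟨y, rfl⟩
    rw [mulVecLin_apply, dot_conj]
    have hkey : (P⁻¹ * Q)ᴴ * T * (P⁻¹ * Q) = 0 := by
      rw [← hPJP, conjTranspose_mul, conjTranspose_nonsing_inv]
      calc Qᴴ * Pᴴ⁻¹ * (Pᴴ * J * P) * (P⁻¹ * Q)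
          = Qᴴ * (Pᴴ⁻¹ * Pᴴ) * J * (P * P⁻¹) * Q := by
            simp only [Matrix.mul_assoc]
        _ = Qᴴ * J * Q := by
            rw [nonsing_inv_mul _ hdPH, mul_nonsing_inv _ hdP]
            simp
        _ = 0 := hQJQ
    rw [hkey, Matrix.zero_mulVec, dotProduct_zero]
  -- inertia bounds
  have hb1 := inertia_aux hT 1 W hWzero
  have hb2 := inertia_aux hT (-1) W hWzero
  rw [hWrank] at hb1 hb2
  have hcard : Fintype.card (Fin n ⊕ Fin n) = n + n := by simp
  rw [hcard] at hb1 hb2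
  have hf1 : (Finset.univ.filter fun i => 0 < (1:ℝ) * hT.eigenvalues i)
      = (Finset.univ.filter fun i => 0 < hT.eigenvalues i) := by
    apply Finset.filter_congr; intro i _; rw [one_mul]
  have hf2 : (Finset.univ.filter fun i => 0 < (-1:ℝ) * hT.eigenvalues i)
      = (Finset.univ.filter fun i => hT.eigenvalues i < 0) := by
    apply Finset.filter_congr; intro i _
    constructor
    · intro h; nlinarith
    · intro h; nlinarith
  rw [hf1] at hb1
  rw [hf2] at hb2
  -- all eigenvalues are nonzero
  have hdetT : T.det ≠ 0 := ((Matrix.isUnit_iff_isUnit_det T).mp hUnitT).ne_zero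
  have hnonzero : ∀ i, hT.eigenvalues i ≠ 0 := by
    intro i h
    apply hdetT
    rw [hT.det_eq_prod_eigenvalues]
    exact Finset.prod_eq_zero (Finset.mem_univ i) (by rw [h]; simp)
  have hsum : (Finset.univ.filter fun i => 0 < hT.eigenvalues i).card
      + (Finset.univ.filter fun i => hT.eigenvalues i < 0).card = n + n := by
    have h1 : (Finset.univ.filter fun i => hT.eigenvalues i < 0)
        = (Finset.univ.filter fun i => ¬ 0 < hT.eigenvalues i) := by
      apply Finset.filter_congr; intro i _
      constructor
      · intro h; exact not_lt.mpr h.le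
      · intro h; exact lt_of_le_of_ne (not_lt.mp h) (hnonzero i)
    rw [h1, Finset.card_filter_add_card_filter_not]
    simp [hcard]
  have hp : (Finset.univ.filter fun i => 0 < hT.eigenvalues i).card = n := by omega
  have hq : (Finset.univ.filter fun i => hT.eigenvalues i < 0).card = n := by omega
  exact ⟨hT, hUnitT, hp, hq, by rw [hp, hq]; ring⟩
end

section
/- Let M be an m × m complex matrix, A a Hermitian m × m complex matrix, B an m × p complex matrix, and D a Hermitian p × p complex matrix, and form the Hermitian block matrix S = [[0, M, 0], [M†, A, B], [0, B†, D]]. Then S is invertible if and only if both M and D are invertible. -/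
open Matrix

private lemma fromRows_add' {m₁ m₂ n : ℕ} (A₁ C₁ : Matrix (Fin m₁) (Fin n) ℂ)
    (A₂ C₂ : Matrix (Fin m₂) (Fin n) ℂ) :
    fromRows A₁ A₂ + fromRows C₁ C₂ = fromRows (A₁ + C₁) (A₂ + C₂) := by
  ext (i | i) j <;> simp

private lemma fromColumns_add' {m n₁ n₂ : ℕ} (A₁ C₁ : Matrix (Fin m) (Fin n₁) ℂ)
    (A₂ C₂ : Matrix (Fin m) (Fin n₂) ℂ) :
    fromCols A₁ A₂ + fromCols C₁ C₂ = fromCols (A₁ + C₁) (A₂ + C₂) := by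
  ext i (j | j) <;> simp

/-- The nondegeneracy claim of Step 2.2: the Hermitian block matrix
`S = [[0, M, 0], [M†, A, B], [0, B†, D]]` is invertible if and only if both `M` and `D`
are invertible. -/
theorem block_invertible_iff (m p : ℕ)
    (M A : Matrix (Fin m) (Fin m) ℂ)
    (B : Matrix (Fin m) (Fin p) ℂ)
    (D : Matrix (Fin p) (Fin p) ℂ)
    (hA : A.IsHermitian) (hD : D.IsHermitian) :
    IsUnit (fromBlocks (fromBlocks 0 M Mᴴ A) (fromRows 0 B) (fromCols 0 Bᴴ) D) ↔
      IsUnit M ∧ IsUnit D := by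
  set S := fromBlocks (fromBlocks 0 M Mᴴ A) (fromRows 0 B) (fromCols 0 Bᴴ) D with hS
  constructor
  · intro hSu
    have hdet : IsUnit S.det := (Matrix.isUnit_iff_isUnit_det S).mp hSu
    set T := S⁻¹ with hT
    have hST : S * T = 1 := Matrix.mul_nonsing_inv S hdet
    have hTS : T * S = 1 := Matrix.nonsing_inv_mul S hdet
    -- M has a right inverse: the (2,1) sub-block of T
    set c : Matrix (Fin m) (Fin m) ℂ :=
      fun i j => T (Sum.inl (Sum.inr i)) (Sum.inl (Sum.inl j)) with hc
    have hMc : M * c = 1 := by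
      ext i j
      have e := Matrix.ext_iff.mpr hST (Sum.inl (Sum.inl i)) (Sum.inl (Sum.inl j))
      simp only [Matrix.mul_apply, Fintype.sum_sum_type, hS, fromBlocks_apply₁₁,
        fromBlocks_apply₁₂, fromRows_apply_inl, Matrix.zero_apply, zero_mul,
        Finset.sum_const_zero, zero_add, add_zero] at e
      rw [Matrix.mul_apply]; simpa [Matrix.one_apply] using e
    have hM : IsUnit M := (Matrix.isUnit_iff_isUnit_det M).mpr (Matrix.isUnit_det_of_right_inverse hMc)
    refine ⟨hM, ?_⟩
    -- the (3,2) sub-block h of T satisfies h * Mᴴ = 0, hence h = 0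
    set h : Matrix (Fin p) (Fin m) ℂ :=
      fun i j => T (Sum.inr i) (Sum.inl (Sum.inr j)) with hh
    set t : Matrix (Fin p) (Fin p) ℂ :=
      fun i j => T (Sum.inr i) (Sum.inr j) with ht
    have hhM : h * Mᴴ = 0 := by
      ext i j
      have e := Matrix.ext_iff.mpr hTS (Sum.inr i) (Sum.inl (Sum.inl j))
      simp only [Matrix.mul_apply, Fintype.sum_sum_type, hS, fromBlocks_apply₁₁,
        fromBlocks_apply₂₁, fromCols_apply_inl, Matrix.zero_apply, mul_zero,
        Finset.sum_const_zero, zero_add, add_zero] at e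
      rw [Matrix.mul_apply]; simpa [Matrix.one_apply] using e
    have hMH : IsUnit Mᴴ.det := by
      rw [Matrix.det_conjTranspose, isUnit_iff_ne_zero, ne_eq, star_eq_zero]
      exact isUnit_iff_ne_zero.mp ((Matrix.isUnit_iff_isUnit_det M).mp hM)
    have hh0 : h = 0 := by
      calc h = h * (Mᴴ * Mᴴ⁻¹) := by rw [Matrix.mul_nonsing_inv _ hMH, Matrix.mul_one]
        _ = (h * Mᴴ) * Mᴴ⁻¹ := by rw [Matrix.mul_assoc]
        _ = 0 := by rw [hhM, Matrix.zero_mul]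
    -- the (3,3) equation of T * S = 1 gives h * B + t * D = 1
    have htD : h * B + t * D = 1 := by
      ext i j
      have e := Matrix.ext_iff.mpr hTS (Sum.inr i) (Sum.inr j)
      simp only [Matrix.mul_apply, Fintype.sum_sum_type, hS, fromBlocks_apply₁₂,
        fromBlocks_apply₂₂, fromRows_apply_inl, fromRows_apply_inr, Matrix.zero_apply, mul_zero,
        Finset.sum_const_zero, zero_add, add_zero] at e
      rw [Matrix.add_apply, Matrix.mul_apply, Matrix.mul_apply]; simpa [Matrix.one_apply] using e
    rw [hh0, Matrix.zero_mul, zero_add] at htD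
    exact (Matrix.isUnit_iff_isUnit_det D).mpr (Matrix.isUnit_det_of_left_inverse htD)
  · rintro ⟨hM, hD'⟩
    have hMd : IsUnit M.det := (Matrix.isUnit_iff_isUnit_det M).mp hM
    have hDd : IsUnit D.det := (Matrix.isUnit_iff_isUnit_det D).mp hD'
    have hMHd : IsUnit Mᴴ.det := by
      rw [Matrix.det_conjTranspose, isUnit_iff_ne_zero, ne_eq, star_eq_zero]
      exact isUnit_iff_ne_zero.mp hMd
    have hMM : M * M⁻¹ = 1 := Matrix.mul_nonsing_inv M hMd
    have hDD : D * D⁻¹ = 1 := Matrix.mul_nonsing_inv D hDd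
    have hMH : Mᴴ * Mᴴ⁻¹ = 1 := Matrix.mul_nonsing_inv Mᴴ hMHd
    set u11 : Matrix (Fin m) (Fin m) ℂ := Mᴴ⁻¹ * ((B * D⁻¹ * Bᴴ - A) * M⁻¹) with hu11
    set T' : Matrix (((Fin m) ⊕ (Fin m)) ⊕ (Fin p)) (((Fin m) ⊕ (Fin m)) ⊕ (Fin p)) ℂ :=
      fromBlocks (fromBlocks u11 Mᴴ⁻¹ M⁻¹ 0) (fromRows (-(Mᴴ⁻¹ * (B * D⁻¹))) 0)
        (fromCols (-(D⁻¹ * (Bᴴ * M⁻¹))) 0) D⁻¹ with hT'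
    have blk : ∀ (a b c d : Matrix (Fin m) (Fin m) ℂ)
        (e f : Matrix (Fin m) (Fin m) ℂ),
        fromBlocks a b c d + fromRows 0 (fromCols e f) =
          fromBlocks a b (c + e) (d + f) := by
      intro a b c d e f
      ext (i | i) (j | j) <;> simp
    have hBD : B * (D⁻¹ * (Bᴴ * M⁻¹)) = B * D⁻¹ * Bᴴ * M⁻¹ := by
      rw [Matrix.mul_assoc, Matrix.mul_assoc]
    have key : S * T' = 1 := by
      rw [hS, hT', fromBlocks_multiply, ← fromBlocks_one]
      refine fromBlocks_inj.mpr ⟨?_, ?_, ?_, ?_⟩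
      · rw [fromBlocks_multiply, fromRows_mul]
        simp only [mul_fromCols, Matrix.zero_mul, Matrix.mul_zero]
        rw [blk, ← fromBlocks_one]
        refine fromBlocks_inj.mpr ⟨?_, ?_, ?_, ?_⟩
        · rw [hMM]; simp
        · simp
        · rw [Matrix.mul_neg, hBD, hu11, ← Matrix.mul_assoc, hMH, Matrix.one_mul,
            Matrix.sub_mul]
          abel
        · rw [hMH]; simp
      · rw [fromBlocks_mul_fromRows, fromRows_mul, fromRows_add']
        simp only [Matrix.zero_mul, Matrix.mul_zero, add_zero, zero_add, Matrix.mul_neg]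
        rw [← Matrix.mul_assoc, hMH, Matrix.one_mul]
        simp
      · rw [fromCols_mul_fromBlocks]
        simp only [mul_fromCols, Matrix.mul_zero, Matrix.zero_mul, Matrix.mul_neg,
          zero_add, add_zero]
        rw [fromColumns_add', ← Matrix.mul_assoc, hDD, Matrix.one_mul]
        simp
      · rw [fromCols_mul_fromRows]
        simp [hDD]
    exact (Matrix.isUnit_iff_isUnit_det S).mpr (Matrix.isUnit_det_of_right_inverse key)
end

section
/- Let V = ⨁_{n∈ℤ} V_n be a complex vector space graded by finitely many nonzero finite-dimensional pieces, let B be a nondegenerate Hermitian sesquilinear form on V with B(V_m, V_n) = 0 whenever m + n ≠ 0, and let Q : V → V be a linear map with Q(V_n) ⊆ V_{n+1}, Q ∘ Q = 0, and B(Qx, y) = B(x, Qy) for all x, y ∈ V. Then ker Q and im Q are graded, B induces a nondegenerate pairing between the cohomology groups H^n = (ker Q ∩ V_n)/Q(V_{n−1}) and H^{−n}, and consequently dim H^n = dim H^{−n} for every n ∈ ℤ. -/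
open Module

section PDaux
variable {V : Type*} [AddCommGroup V] [Module ℂ V]
variable {Vg : ℤ → Submodule ℂ V} {B : V → V → ℂ}

lemma PD_B_add_left (hlin : ∀ x, IsLinearMap ℂ (B x)) (hherm : ∀ x y, B x y = star (B y x))
    (a b y : V) : B (a + b) y = B a y + B b y := by
  rw [hherm, (hlin y).map_add, star_add, ← hherm, ← hherm]

lemma PD_B_sub_left (hlin : ∀ x, IsLinearMap ℂ (B x)) (hherm : ∀ x y, B x y = star (B y x))
    (a b y : V) : B (a - b) y = B a y - B b y := by
  rw [hherm, (hlin y).map_sub, star_sub, ← hherm, ← hherm]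

lemma PD_B_zero_left (hlin : ∀ x, IsLinearMap ℂ (B x)) (hherm : ∀ x y, B x y = star (B y x))
    (y : V) : B 0 y = 0 := by
  rw [hherm, (hlin y).map_zero, star_zero]

lemma PD_B_smul_left (hlin : ∀ x, IsLinearMap ℂ (B x)) (hherm : ∀ x y, B x y = star (B y x))
    (c : ℂ) (a y : V) : B (c • a) y = star c * B a y := by
  rw [hherm, (hlin y).map_smul, smul_eq_mul, star_mul', ← hherm]

/-- Left nondegeneracy of the degree-wise pairing. -/
lemma PD_nondeg_left (hinternal : DirectSum.IsInternal Vg)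
    (hlin : ∀ x, IsLinearMap ℂ (B x))
    (hnondeg : ∀ x, (∀ y, B x y = 0) → x = 0)
    (hpair : ∀ m n : ℤ, m + n ≠ 0 → ∀ x ∈ Vg m, ∀ y ∈ Vg n, B x y = 0)
    {n : ℤ} {x : V} (hx : x ∈ Vg n)
    (h : ∀ y ∈ Vg (-n), B x y = 0) : x = 0 := by
  apply hnondeg
  intro y
  have hy : y ∈ ⨆ m, Vg m := by
    rw [hinternal.submodule_iSup_eq_top]; trivial
  refine Submodule.iSup_induction (motive := fun y => B x y = 0) Vg hy ?_ ?_ ?_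
  · intro m z hz
    by_cases hm : m = -n
    · exact h z (hm ▸ hz)
    · exact hpair n m (by omega) x hx z hz
  · exact (hlin x).map_zero
  · intro a b ha hb
    rw [(hlin x).map_add, ha, hb, add_zero]

lemma PD_nondeg_right (hinternal : DirectSum.IsInternal Vg)
    (hlin : ∀ x, IsLinearMap ℂ (B x))
    (hherm : ∀ x y, B x y = star (B y x))
    (hnondeg : ∀ x, (∀ y, B x y = 0) → x = 0)
    (hpair : ∀ m n : ℤ, m + n ≠ 0 → ∀ x ∈ Vg m, ∀ y ∈ Vg n, B x y = 0)
    {n : ℤ} {y : V} (hy : y ∈ Vg n)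
    (h : ∀ x ∈ Vg (-n), B x y = 0) : y = 0 := by
  refine PD_nondeg_left hinternal hlin hnondeg hpair hy fun z hz => ?_
  rw [hherm, h z hz, star_zero]

/-- The whole space is finite dimensional. -/
lemma PD_fd (hinternal : DirectSum.IsInternal Vg)
    (hbounded : {n : ℤ | Vg n ≠ ⊥}.Finite)
    (hfd : ∀ n : ℤ, FiniteDimensional ℂ (Vg n)) : FiniteDimensional ℂ V := by
  classical
  have htop : (⊤ : Submodule ℂ V) = hbounded.toFinset.sup Vg := by
    rw [← hinternal.submodule_iSup_eq_top]
    apply le_antisymm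
    · refine iSup_le fun n => ?_
      by_cases h : Vg n = ⊥
      · rw [h]; exact bot_le
      · exact Finset.le_sup (by simp [Set.Finite.mem_toFinset]; exact h)
    · exact Finset.sup_le fun n _ => le_iSup Vg n
  have h2 : FiniteDimensional ℂ ↥(hbounded.toFinset.sup Vg) :=
    Submodule.finiteDimensional_finset_sup _ _
  rw [← htop] at h2
  exact (Submodule.topEquiv (R := ℂ) (M := V)).finiteDimensional

end PDaux


section PDaux2
variable {V : Type*} [AddCommGroup V] [Module ℂ V]
variable (Vg : ℤ → Submodule ℂ V) (B : V → V → ℂ)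

/-- The pairing, packaged as a real-linear map into the dual. -/
noncomputable def PD_Bmap (hlin : ∀ x, IsLinearMap ℂ (B x))
    (hherm : ∀ x y, B x y = star (B y x)) (m k : ℤ) :
    ↥(Vg m) →ₗ[ℝ] (↥(Vg k) →ₗ[ℂ] ℂ) where
  toFun x := (IsLinearMap.mk' (B ↑x) (hlin ↑x)).comp (Vg k).subtype
  map_add' a b := by
    ext y
    simp only [LinearMap.comp_apply, LinearMap.add_apply, IsLinearMap.mk'_apply,
      Submodule.coe_subtype, Submodule.coe_add]
    exact PD_B_add_left hlin hherm _ _ _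
  map_smul' c a := by
    ext y
    simp only [LinearMap.comp_apply, LinearMap.smul_apply, IsLinearMap.mk'_apply,
      Submodule.coe_subtype, RingHom.id_apply]
    have h1 : ((c • a : ↥(Vg m)) : V) = (c : ℂ) • (a : V) := by
      rw [← algebraMap_smul ℂ c a]
      rfl
    rw [h1, PD_B_smul_left hlin hherm]
    simp [Complex.real_smul]

lemma PD_Bmap_apply (hlin : ∀ x, IsLinearMap ℂ (B x))
    (hherm : ∀ x y, B x y = star (B y x)) (m k : ℤ) (x : ↥(Vg m)) (y : ↥(Vg k)) :
    PD_Bmap Vg B hlin hherm m k x y = B ↑x ↑y := rfl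

variable {Vg B}

lemma PD_Bmap_injective (hinternal : DirectSum.IsInternal Vg)
    (hlin : ∀ x, IsLinearMap ℂ (B x)) (hherm : ∀ x y, B x y = star (B y x))
    (hnondeg : ∀ x, (∀ y, B x y = 0) → x = 0)
    (hpair : ∀ m n : ℤ, m + n ≠ 0 → ∀ x ∈ Vg m, ∀ y ∈ Vg n, B x y = 0)
    (m : ℤ) : Function.Injective (PD_Bmap Vg B hlin hherm m (-m)) := by
  rw [injective_iff_map_eq_zero]
  intro x hx
  have : (x : V) = 0 := by
    refine PD_nondeg_left hinternal hlin hnondeg hpair x.2 fun y hy => ?_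
    have := congrFun (congrArg DFunLike.coe hx) ⟨y, hy⟩
    simpa [PD_Bmap_apply] using this
  exact Subtype.ext this

lemma PD_finrank_le (hinternal : DirectSum.IsInternal Vg)
    (hfdV : FiniteDimensional ℂ V)
    (hlin : ∀ x, IsLinearMap ℂ (B x)) (hherm : ∀ x y, B x y = star (B y x))
    (hnondeg : ∀ x, (∀ y, B x y = 0) → x = 0)
    (hpair : ∀ m n : ℤ, m + n ≠ 0 → ∀ x ∈ Vg m, ∀ y ∈ Vg n, B x y = 0)
    (m : ℤ) : finrank ℝ ↥(Vg m) ≤ finrank ℝ ↥(Vg (-m)) := by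
  have h1 := LinearMap.finrank_le_finrank_of_injective
    (f := PD_Bmap Vg B hlin hherm m (-m))
    (PD_Bmap_injective hinternal hlin hherm hnondeg hpair m)
  calc finrank ℝ ↥(Vg m) ≤ finrank ℝ (↥(Vg (-m)) →ₗ[ℂ] ℂ) := h1
    _ = finrank ℝ ↥(Vg (-m)) := by
        rw [finrank_real_of_complex, finrank_real_of_complex, Module.finrank_linearMap,
          finrank_self, mul_one]

lemma PD_finrank_eq (hinternal : DirectSum.IsInternal Vg)
    (hfdV : FiniteDimensional ℂ V)
    (hlin : ∀ x, IsLinearMap ℂ (B x)) (hherm : ∀ x y, B x y = star (B y x))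
    (hnondeg : ∀ x, (∀ y, B x y = 0) → x = 0)
    (hpair : ∀ m n : ℤ, m + n ≠ 0 → ∀ x ∈ Vg m, ∀ y ∈ Vg n, B x y = 0)
    (m : ℤ) : finrank ℝ ↥(Vg m) = finrank ℝ ↥(Vg (-m)) := by
  refine le_antisymm (PD_finrank_le hinternal hfdV hlin hherm hnondeg hpair m) ?_
  have := PD_finrank_le hinternal hfdV hlin hherm hnondeg hpair (-m)
  rwa [neg_neg] at this

lemma PD_Bmap_surjective (hinternal : DirectSum.IsInternal Vg)
    (hfdV : FiniteDimensional ℂ V)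
    (hlin : ∀ x, IsLinearMap ℂ (B x)) (hherm : ∀ x y, B x y = star (B y x))
    (hnondeg : ∀ x, (∀ y, B x y = 0) → x = 0)
    (hpair : ∀ m n : ℤ, m + n ≠ 0 → ∀ x ∈ Vg m, ∀ y ∈ Vg n, B x y = 0)
    (m : ℤ) : Function.Surjective (PD_Bmap Vg B hlin hherm m (-m)) := by
  have heq : finrank ℝ ↥(Vg m) = finrank ℝ (↥(Vg (-m)) →ₗ[ℂ] ℂ) := by
    rw [PD_finrank_eq hinternal hfdV hlin hherm hnondeg hpair m]
    rw [finrank_real_of_complex, finrank_real_of_complex, Module.finrank_linearMap,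
      finrank_self, mul_one]
  exact (LinearMap.injective_iff_surjective_of_finrank_eq_finrank heq).mp
    (PD_Bmap_injective hinternal hlin hherm hnondeg hpair m)

end PDaux2

section PDaux3
variable {V : Type*} [AddCommGroup V] [Module ℂ V]
variable {Vg : ℤ → Submodule ℂ V} {B : V → V → ℂ} {Q : V →ₗ[ℂ] V}

/-- The key (Poincaré-duality) step: a cocycle of degree `n` pairing to zero with all
cocycles of degree `-n` is a coboundary. -/
lemma PD_key (hinternal : DirectSum.IsInternal Vg)
    (hfdV : FiniteDimensional ℂ V)
    (hlin : ∀ x, IsLinearMap ℂ (B x)) (hherm : ∀ x y, B x y = star (B y x))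
    (hnondeg : ∀ x, (∀ y, B x y = 0) → x = 0)
    (hpair : ∀ m n : ℤ, m + n ≠ 0 → ∀ x ∈ Vg m, ∀ y ∈ Vg n, B x y = 0)
    (hQdeg : ∀ n : ℤ, (Vg n).map Q ≤ Vg (n + 1))
    (hselfadj : ∀ x y, B (Q x) y = B x (Q y))
    (n : ℤ) (x : V) (hxk : x ∈ LinearMap.ker Q) (hxn : x ∈ Vg n)
    (h : ∀ y, y ∈ LinearMap.ker Q → y ∈ Vg (-n) → B x y = 0) :
    x ∈ (Vg (n - 1)).map Q := by
  classical
  set W := Vg (-n) with hW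
  set Q' : ↥W →ₗ[ℂ] V := Q.comp W.subtype with hQ'
  set ψ : ↥W →ₗ[ℂ] ℂ := (IsLinearMap.mk' (B x) (hlin x)).comp W.subtype with hψ
  have hker : LinearMap.ker Q' ≤ LinearMap.ker ψ := by
    intro y hy
    simp only [LinearMap.mem_ker, hQ', LinearMap.comp_apply, Submodule.coe_subtype] at hy
    simp only [LinearMap.mem_ker, hψ, LinearMap.comp_apply, IsLinearMap.mk'_apply,
      Submodule.coe_subtype]
    exact h ↑y hy y.2
  set φ : ↥(LinearMap.range Q') →ₗ[ℂ] ℂ :=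
    ((LinearMap.ker Q').liftQ ψ hker).comp (Q'.quotKerEquivRange.symm : _ →ₗ[ℂ] _) with hφ
  have hφ1 : ∀ y : ↥W, φ ⟨Q' y, LinearMap.mem_range_self _ y⟩ = B x ↑y := by
    intro y
    have : (⟨Q' y, LinearMap.mem_range_self _ y⟩ : ↥(LinearMap.range Q')) =
        Q'.quotKerEquivRange (Submodule.Quotient.mk y) := Subtype.ext rfl
    rw [hφ, LinearMap.comp_apply, this]
    simp only [LinearEquiv.coe_coe, LinearEquiv.symm_apply_apply]
    rw [Submodule.liftQ_apply]
    rfl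
  obtain ⟨g, hg⟩ := LinearMap.exists_extend φ
  -- find u ∈ Vg (n-1) representing g on Vg (-(n-1))
  obtain ⟨u, hu⟩ := PD_Bmap_surjective hinternal hfdV hlin hherm hnondeg hpair (n - 1)
    (g.comp (Vg (-(n - 1))).subtype)
  have hrange : ∀ y : ↥W, Q ↑y ∈ Vg (-(n - 1)) := by
    intro y
    have : Q ↑y ∈ Vg (-n + 1) := hQdeg (-n) ⟨↑y, y.2, rfl⟩
    have e : (-n + 1 : ℤ) = -(n - 1) := by ring
    rwa [e] at this
  have hBu : ∀ y : ↥W, B ↑u (Q ↑y) = B x ↑y := by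
    intro y
    have h1 : B ↑u (Q ↑y) = (g.comp (Vg (-(n - 1))).subtype) ⟨Q ↑y, hrange y⟩ := by
      rw [← hu]; rfl
    rw [h1]
    have h2 : (g.comp (Vg (-(n-1))).subtype) ⟨Q ↑y, hrange y⟩ = g (Q ↑y) := rfl
    have h3 : g (Q ↑y) = φ ⟨Q' y, LinearMap.mem_range_self _ y⟩ := by
      rw [← hg]; rfl
    rw [h2, h3, hφ1]
  have hQu : Q ↑u ∈ Vg n := by
    have : Q ↑u ∈ Vg ((n - 1) + 1) := hQdeg (n - 1) ⟨↑u, u.2, rfl⟩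
    have e : ((n : ℤ) - 1 + 1) = n := by ring
    rwa [e] at this
  have hzero : x - Q ↑u = 0 := by
    refine PD_nondeg_left hinternal hlin hnondeg hpair (Submodule.sub_mem _ hxn hQu)
      fun y hy => ?_
    rw [PD_B_sub_left hlin hherm]
    rw [hselfadj, hBu ⟨y, hy⟩, sub_self]
  exact ⟨↑u, u.2, (sub_eq_zero.mp hzero).symm⟩

end PDaux3
section PDaux4
variable {V : Type*} [AddCommGroup V] [Module ℂ V]
variable {Vg : ℤ → Submodule ℂ V} {Q : V →ₗ[ℂ] V}

set_option synthInstance.maxHeartbeats 400000 in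
lemma PD_decompose_comm [DirectSum.Decomposition Vg]
    (hQdeg : ∀ n : ℤ, (Vg n).map Q ≤ Vg (n + 1)) (x : V) (n : ℤ) :
    ((DirectSum.decompose Vg (Q x) (n + 1) : ↥(Vg (n + 1))) : V) =
      Q ((DirectSum.decompose Vg x n : ↥(Vg n)) : V) := by
  induction x using DirectSum.Decomposition.inductionOn Vg with
  | zero => simp
  | homogeneous z =>
      rename_i m
      have hz : Q (z : V) ∈ Vg (m + 1) := hQdeg m ⟨↑z, z.2, rfl⟩
      have h1 : Q (z : V) = ((⟨Q ↑z, hz⟩ : ↥(Vg (m + 1))) : V) := rfl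
      by_cases hm : m = n
      · subst hm
        rw [DirectSum.decompose_coe, h1, DirectSum.decompose_coe,
          DirectSum.of_eq_same, DirectSum.of_eq_same]
      · rw [DirectSum.decompose_coe, h1, DirectSum.decompose_coe,
          DirectSum.of_eq_of_ne _ _ _ (by omega), DirectSum.of_eq_of_ne _ _ _ (Ne.symm hm)]
        simp
  | add a b ha hb =>
      simp only [map_add, DirectSum.decompose_add, DirectSum.add_apply,
        Submodule.coe_add, ha, hb]

lemma PD_ker_graded (hinternal : DirectSum.IsInternal Vg)
    (hQdeg : ∀ n : ℤ, (Vg n).map Q ≤ Vg (n + 1)) :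
    LinearMap.ker Q = ⨆ n : ℤ, LinearMap.ker Q ⊓ Vg n := by
  classical
  letI := hinternal.chooseDecomposition
  apply le_antisymm
  · intro x hx
    have hxQ : Q x = 0 := hx
    rw [← DirectSum.sum_support_decompose Vg x]
    refine Submodule.sum_mem _ fun i _ => ?_
    have h0 : Q ((DirectSum.decompose Vg x i : ↥(Vg i)) : V) = 0 := by
      rw [← PD_decompose_comm hQdeg x i, hxQ]
      simp
    exact Submodule.mem_iSup_of_mem i
      ⟨LinearMap.mem_ker.mpr h0, (DirectSum.decompose Vg x i).2⟩
  · exact iSup_le fun n => inf_le_left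

lemma PD_range_graded (hinternal : DirectSum.IsInternal Vg)
    (hQdeg : ∀ n : ℤ, (Vg n).map Q ≤ Vg (n + 1)) :
    LinearMap.range Q = ⨆ n : ℤ, LinearMap.range Q ⊓ Vg n := by
  classical
  letI := hinternal.chooseDecomposition
  apply le_antisymm
  · rintro _ ⟨x, rfl⟩
    have hx : Q x = Q (∑ i ∈ (DirectSum.decompose Vg x).support,
        ((DirectSum.decompose Vg x i : ↥(Vg i)) : V)) := by
      rw [DirectSum.sum_support_decompose]
    rw [hx, map_sum]
    refine Submodule.sum_mem _ fun i _ => ?_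
    exact Submodule.mem_iSup_of_mem (i + 1)
      ⟨LinearMap.mem_range_self _ _, hQdeg i ⟨_, (DirectSum.decompose Vg x i).2, rfl⟩⟩
  · exact iSup_le fun n => inf_le_left
end PDaux4
/-- The degree-`n` cohomology of a graded differential `Q`:
`H^n = (ker Q ∩ V_n) / Q(V_{n-1})`. -/
abbrev gradedCohomology {V : Type*} [AddCommGroup V] [Module ℂ V]
    (Vg : ℤ → Submodule ℂ V) (Q : V →ₗ[ℂ] V) (n : ℤ) :=
  ↥(LinearMap.ker Q ⊓ Vg n) ⧸
    ((Vg (n - 1)).map Q).comap (LinearMap.ker Q ⊓ Vg n).subtype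

section PDaux5
variable {V : Type*} [AddCommGroup V] [Module ℂ V]
variable {Vg : ℤ → Submodule ℂ V} {B : V → V → ℂ} {Q : V →ₗ[ℂ] V}

/-- The functional on `H^{-n}` induced by pairing with a cocycle of degree `n`. -/
noncomputable def PD_Phi (hlin : ∀ x, IsLinearMap ℂ (B x))
    (hherm : ∀ x y, B x y = star (B y x))
    (hselfadj : ∀ x y, B (Q x) y = B x (Q y)) (n : ℤ)
    (x : ↥(LinearMap.ker Q ⊓ Vg n)) : gradedCohomology Vg Q (-n) →ₗ[ℂ] ℂ :=
  Submodule.liftQ _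
    ((IsLinearMap.mk' (B ↑x) (hlin ↑x)).comp (LinearMap.ker Q ⊓ Vg (-n)).subtype)
    (by
      rintro y hy
      simp only [Submodule.mem_comap] at hy
      obtain ⟨v, hv, hQv⟩ := hy
      have hQv' : Q v = (y : V) := hQv
      simp only [LinearMap.mem_ker, LinearMap.comp_apply, IsLinearMap.mk'_apply,
        Submodule.coe_subtype]
      rw [← hQv', ← hselfadj]
      have hx0 : Q (x : V) = 0 := x.2.1
      rw [hx0, PD_B_zero_left hlin hherm])

lemma PD_Phi_mk (hlin : ∀ x, IsLinearMap ℂ (B x))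
    (hherm : ∀ x y, B x y = star (B y x))
    (hselfadj : ∀ x y, B (Q x) y = B x (Q y)) (n : ℤ)
    (x : ↥(LinearMap.ker Q ⊓ Vg n)) (y : ↥(LinearMap.ker Q ⊓ Vg (-n))) :
    PD_Phi hlin hherm hselfadj n x (Submodule.Quotient.mk y) = B ↑x ↑y := rfl

/-- Pairing with cocycles, as a real-linear map on cocycles. -/
noncomputable def PD_F (hlin : ∀ x, IsLinearMap ℂ (B x))
    (hherm : ∀ x y, B x y = star (B y x))
    (hselfadj : ∀ x y, B (Q x) y = B x (Q y)) (n : ℤ) :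
    ↥(LinearMap.ker Q ⊓ Vg n) →ₗ[ℝ] (gradedCohomology Vg Q (-n) →ₗ[ℂ] ℂ) where
  toFun := PD_Phi hlin hherm hselfadj n
  map_add' x y := by
    ext c
    show B ((x : V) + (y : V)) ↑c = B ↑x ↑c + B ↑y ↑c
    exact PD_B_add_left hlin hherm _ _ _
  map_smul' c x := by
    ext z
    have h1 : ((c • x : ↥(LinearMap.ker Q ⊓ Vg n)) : V) = (c : ℂ) • (x : V) := by
      rw [← algebraMap_smul ℂ c x]; rfl
    show B ((c • x : ↥(LinearMap.ker Q ⊓ Vg n)) : V) ↑z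
      = (c • PD_Phi hlin hherm hselfadj n x) (Submodule.Quotient.mk z)
    rw [h1, PD_B_smul_left hlin hherm]
    have h2 : (c • PD_Phi hlin hherm hselfadj n x) (Submodule.Quotient.mk z)
        = (c : ℂ) • (PD_Phi hlin hherm hselfadj n x (Submodule.Quotient.mk z)) := by
      rw [← algebraMap_smul ℂ c (PD_Phi hlin hherm hselfadj n x), LinearMap.smul_apply]
      rfl
    rw [h2, PD_Phi_mk, smul_eq_mul, Complex.star_def, Complex.conj_ofReal]

/-- The induced real-linear map `H^n → (H^{-n})^*`. -/
noncomputable def PD_T (hlin : ∀ x, IsLinearMap ℂ (B x))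
    (hherm : ∀ x y, B x y = star (B y x))
    (hselfadj : ∀ x y, B (Q x) y = B x (Q y)) (n : ℤ) :
    gradedCohomology Vg Q n →ₗ[ℝ] (gradedCohomology Vg Q (-n) →ₗ[ℂ] ℂ) :=
  (Submodule.liftQ
      ((((Vg (n - 1)).map Q).comap (LinearMap.ker Q ⊓ Vg n).subtype).restrictScalars ℝ)
      (PD_F hlin hherm hselfadj n)
      (by
        intro x hx
        rw [Submodule.restrictScalars_mem] at hx
        simp only [Submodule.mem_comap] at hx
        obtain ⟨u, hu, hQu⟩ := hx
        have hQu' : Q u = (x : V) := hQu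
        rw [LinearMap.mem_ker]
        ext z
        show B (x : V) ↑z = (0 : gradedCohomology Vg Q (-n) →ₗ[ℂ] ℂ)
          (Submodule.Quotient.mk z)
        rw [← hQu', hselfadj]
        have hz0 : Q (z : V) = 0 := z.2.1
        rw [hz0, (hlin u).map_zero]
        rfl)).comp
    ((Submodule.Quotient.restrictScalarsEquiv ℝ
        (((Vg (n - 1)).map Q).comap (LinearMap.ker Q ⊓ Vg n).subtype)).symm :
      gradedCohomology Vg Q n →ₗ[ℝ] _)

lemma PD_T_mk (hlin : ∀ x, IsLinearMap ℂ (B x))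
    (hherm : ∀ x y, B x y = star (B y x))
    (hselfadj : ∀ x y, B (Q x) y = B x (Q y)) (n : ℤ)
    (x : ↥(LinearMap.ker Q ⊓ Vg n)) :
    PD_T hlin hherm hselfadj n (Submodule.Quotient.mk x)
      = PD_Phi hlin hherm hselfadj n x := by
  unfold PD_T
  rw [LinearMap.comp_apply]
  have h1 := Submodule.Quotient.restrictScalarsEquiv_symm_mk ℝ
    ((((Vg (n - 1)).map Q).comap (LinearMap.ker Q ⊓ Vg n).subtype)) x
  rw [LinearEquiv.coe_coe, h1, Submodule.liftQ_apply]
  rfl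

end PDaux5
/-- Poincaré duality: for a graded vector space `V = ⨁_{n∈ℤ} V_n` with finitely many
nonzero finite-dimensional pieces, a nondegenerate Hermitian form `B` pairing only
opposite degrees, and a self-adjoint degree-one differential `Q`, the kernel and image of
`Q` are graded, `B` induces a nondegenerate pairing between `H^n` and `H^{-n}`, and
consequently `dim H^n = dim H^{-n}` for every `n`. -/
theorem poincare_duality {V : Type*} [AddCommGroup V] [Module ℂ V]
    (Vg : ℤ → Submodule ℂ V) (hinternal : DirectSum.IsInternal Vg)
    (hbounded : {n : ℤ | Vg n ≠ ⊥}.Finite)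
    (hfd : ∀ n : ℤ, FiniteDimensional ℂ (Vg n))
    (B : V → V → ℂ)
    (hlin : ∀ x, IsLinearMap ℂ (B x))
    (hherm : ∀ x y, B x y = star (B y x))
    (hnondeg : ∀ x, (∀ y, B x y = 0) → x = 0)
    (hpair : ∀ m n : ℤ, m + n ≠ 0 → ∀ x ∈ Vg m, ∀ y ∈ Vg n, B x y = 0)
    (Q : V →ₗ[ℂ] V)
    (hQdeg : ∀ n : ℤ, (Vg n).map Q ≤ Vg (n + 1))
    (hQ2 : Q ∘ₗ Q = 0)
    (hselfadj : ∀ x y, B (Q x) y = B x (Q y)) :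
    (LinearMap.ker Q = ⨆ n : ℤ, LinearMap.ker Q ⊓ Vg n) ∧
      (LinearMap.range Q = ⨆ n : ℤ, LinearMap.range Q ⊓ Vg n) ∧
      (∀ n : ℤ, ∃ P : gradedCohomology Vg Q n → gradedCohomology Vg Q (-n) → ℂ,
        (∀ (x : ↥(LinearMap.ker Q ⊓ Vg n)) (y : ↥(LinearMap.ker Q ⊓ Vg (-n))),
          P (Submodule.Quotient.mk x) (Submodule.Quotient.mk y) = B x y) ∧
        (∀ x, (∀ y, P x y = 0) → x = 0) ∧
        (∀ y, (∀ x, P x y = 0) → y = 0)) ∧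
      (∀ n : ℤ, Module.finrank ℂ (gradedCohomology Vg Q n) =
        Module.finrank ℂ (gradedCohomology Vg Q (-n))) := by
  haveI hfdV : FiniteDimensional ℂ V := PD_fd hinternal hbounded hfd
  refine ⟨PD_ker_graded hinternal hQdeg, PD_range_graded hinternal hQdeg, ?_, ?_⟩
  · -- the nondegenerate pairing
    intro n
    refine ⟨fun a b => PD_T hlin hherm hselfadj n a b, fun x y => ?_, ?_, ?_⟩
    · simp only [PD_T_mk, PD_Phi_mk]
    · intro a h
      obtain ⟨x, rfl⟩ := Submodule.Quotient.mk_surjective _ a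
      have hBx : ∀ y, y ∈ LinearMap.ker Q → y ∈ Vg (-n) → B ↑x y = 0 := by
        intro y h1 h2
        have := h (Submodule.Quotient.mk ⟨y, h1, h2⟩)
        simpa only [PD_T_mk, PD_Phi_mk] using this
      have hx := PD_key hinternal hfdV hlin hherm hnondeg hpair hQdeg hselfadj n
        ↑x x.2.1 x.2.2 hBx
      exact (Submodule.Quotient.mk_eq_zero _).mpr (by simpa using hx)
    · intro b h
      obtain ⟨y, rfl⟩ := Submodule.Quotient.mk_surjective _ b
      have hBy : ∀ z, z ∈ LinearMap.ker Q → z ∈ Vg (-(-n)) → B ↑y z = 0 := by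
        intro z h1 h2
        have h2' : z ∈ Vg n := by rwa [neg_neg] at h2
        have := h (Submodule.Quotient.mk ⟨z, h1, h2'⟩)
        simp only [PD_T_mk, PD_Phi_mk] at this
        rw [hherm, this, star_zero]
      have hy := PD_key hinternal hfdV hlin hherm hnondeg hpair hQdeg hselfadj (-n)
        ↑y y.2.1 y.2.2 hBy
      exact (Submodule.Quotient.mk_eq_zero _).mpr (by simpa using hy)
  · -- equality of dimensions
    have key_le : ∀ m : ℤ, Module.finrank ℂ (gradedCohomology Vg Q m) ≤
        Module.finrank ℂ (gradedCohomology Vg Q (-m)) := by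
      intro m
      have hinj : Function.Injective (PD_T (Vg := Vg) hlin hherm hselfadj m) := by
        rw [injective_iff_map_eq_zero]
        intro a ha
        obtain ⟨x, rfl⟩ := Submodule.Quotient.mk_surjective _ a
        rw [PD_T_mk] at ha
        have hBx : ∀ y, y ∈ LinearMap.ker Q → y ∈ Vg (-m) → B ↑x y = 0 := by
          intro y h1 h2
          have := congrFun (congrArg DFunLike.coe ha) (Submodule.Quotient.mk ⟨y, h1, h2⟩)
          rwa [PD_Phi_mk] at this
        have hx := PD_key hinternal hfdV hlin hherm hnondeg hpair hQdeg hselfadj m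
          ↑x x.2.1 x.2.2 hBx
        exact (Submodule.Quotient.mk_eq_zero _).mpr (by simpa using hx)
      have hle := LinearMap.finrank_le_finrank_of_injective
        (f := PD_T (Vg := Vg) hlin hherm hselfadj m) hinj
      rw [finrank_real_of_complex, finrank_real_of_complex, Module.finrank_linearMap,
        finrank_self, mul_one] at hle
      omega
    intro n
    refine le_antisymm (key_le n) ?_
    have := key_le (-n)
    rwa [neg_neg] at this
end

section
/- Let V be a finite-dimensional complex vector space with a nondegenerate Hermitian sesquilinear form B, and let Q : V → V be a linear map with Q ∘ Q = 0 that is self-adjoint with respect to B. If the signature of B on V equals the dimension of the cohomology H = ker Q / im Q, then the induced Hermitian form B̄ on H is positive definite. -/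
open Matrix Finset in
lemma herm_sum_expand {V : Type*} [AddCommGroup V] [Module ℂ V]
    (B : V → V → ℂ) (hlin : ∀ x, IsLinearMap ℂ (B x))
    (hherm : ∀ x y, B x y = star (B y x))
    {ι : Type*} (s : Finset ι) (c d : ι → ℂ) (v w : ι → V) :
    B (∑ i ∈ s, c i • v i) (∑ j ∈ s, d j • w j)
      = ∑ i ∈ s, ∑ j ∈ s, star (c i) * (d j * B (v i) (w j)) := by
  have h2 : ∀ x (t : Finset ι) (d : ι → ℂ) (w : ι → V),
      B x (∑ j ∈ t, d j • w j) = ∑ j ∈ t, d j * B x (w j) := by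
    intro x t d w
    rw [show B x = (IsLinearMap.mk' (B x) (hlin x) : V →ₗ[ℂ] ℂ) from rfl, map_sum]
    simp [IsLinearMap.mk'_apply]
  rw [h2]
  conv_rhs => rw [Finset.sum_comm]
  refine Finset.sum_congr rfl fun j _ => ?_
  rw [hherm, h2, star_sum, Finset.mul_sum]
  refine Finset.sum_congr rfl fun i _ => ?_
  rw [star_mul', ← hherm]
  ring

noncomputable def hermitianSignature {n : Type*} [Fintype n] [DecidableEq n]
    {M : Matrix n n ℂ} (hM : M.IsHermitian) : ℤ :=
  ((Finset.univ.filter fun i => 0 < hM.eigenvalues i).card : ℤ) -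
    ((Finset.univ.filter fun i => hM.eigenvalues i < 0).card : ℤ)

/-- The no-ghost criterion (Step 2): for a nondegenerate Hermitian form `B` and a
self-adjoint differential `Q` on a finite-dimensional complex vector space, if the
signature of `B` on `V` equals the dimension of the cohomology `H = ker Q / im Q`, then
the induced Hermitian form on `H` is positive definite. -/
theorem no_ghost_criterion {V : Type*} [AddCommGroup V] [Module ℂ V]
    [FiniteDimensional ℂ V]
    (B : V → V → ℂ)
    (hlin : ∀ x, IsLinearMap ℂ (B x))
    (hherm : ∀ x y, B x y = star (B y x))
    (hnondeg : ∀ x, (∀ y, B x y = 0) → x = 0)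
    (Q : V →ₗ[ℂ] V) (hQ2 : Q ∘ₗ Q = 0)
    (hselfadj : ∀ x y, B (Q x) y = B x (Q y))
    (Bbar : (↥(LinearMap.ker Q) ⧸ (LinearMap.range Q).comap (LinearMap.ker Q).subtype) →
      (↥(LinearMap.ker Q) ⧸ (LinearMap.range Q).comap (LinearMap.ker Q).subtype) → ℂ)
    (hdesc : ∀ x y : LinearMap.ker Q,
      Bbar (Submodule.Quotient.mk x) (Submodule.Quotient.mk y) = B x y)
    (n : ℕ) (bV : Module.Basis (Fin n) ℂ V)
    (hGV : (Matrix.of fun i j => B (bV i) (bV j)).IsHermitian)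
    (hsig : hermitianSignature hGV =
      (Module.finrank ℂ
        (↥(LinearMap.ker Q) ⧸ (LinearMap.range Q).comap (LinearMap.ker Q).subtype) : ℤ)) :
    ∀ x : (↥(LinearMap.ker Q) ⧸ (LinearMap.range Q).comap (LinearMap.ker Q).subtype),
      x ≠ 0 → ∃ r : ℝ, 0 < r ∧ Bbar x x = (r : ℂ) := by
  classical
  set G : Matrix (Fin n) (Fin n) ℂ := Matrix.of fun i j => B (bV i) (bV j) with hG
  set ev : Fin n → ℝ := hGV.eigenvalues with hev
  set U : Matrix (Fin n) (Fin n) ℂ := (hGV.eigenvectorUnitary : Matrix (Fin n) (Fin n) ℂ) with hU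
  have hdimV : Module.finrank ℂ V = n := by
    rw [Module.finrank_eq_card_basis bV, Fintype.card_fin]
  -- G is invertible
  have hGdet : G.det ≠ 0 := by
    intro hdet
    obtain ⟨v, hv, hMv⟩ := (Matrix.exists_mulVec_eq_zero_iff).2 hdet
    have hz : ∀ y, B (bV.equivFun.symm v) y = 0 := by
      have hzi : ∀ i, B (bV i) (bV.equivFun.symm v) = 0 := by
        intro i
        have := congrFun hMv i
        rw [Matrix.mulVec, dotProduct] at this
        rw [Module.Basis.equivFun_symm_apply]
        rw [show B (bV i) = (IsLinearMap.mk' _ (hlin (bV i)) : V →ₗ[ℂ] ℂ) from rfl, map_sum]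
        simpa [IsLinearMap.mk'_apply, mul_comm, hG] using this
      intro y
      conv_lhs => rw [← bV.sum_repr y]
      rw [show B (bV.equivFun.symm v)
          = ((IsLinearMap.mk' _ (hlin (bV.equivFun.symm v)) : V →ₗ[ℂ] ℂ) : V → ℂ) from rfl,
        map_sum]
      refine Finset.sum_eq_zero fun i _ => ?_
      simp only [map_smul, IsLinearMap.mk'_apply, smul_eq_mul]
      rw [hherm, hzi i]
      simp
    have hz0 := hnondeg _ hz
    exact hv (bV.equivFun.symm.injective (hz0.trans (map_zero _).symm))
  have hev_ne : ∀ i, ev i ≠ 0 := by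
    intro i h0
    apply hGdet
    rw [hGV.det_eq_prod_eigenvalues]
    exact Finset.prod_eq_zero (Finset.mem_univ i) (by rw [← hev, h0]; simp)
  -- p + q = n
  have hpq : (Finset.univ.filter fun i => 0 < ev i).card
      + (Finset.univ.filter fun i => ev i < 0).card = n := by
    rw [show (Finset.univ.filter fun i => ev i < 0)
        = (Finset.univ.filter fun i => ¬ 0 < ev i) by
      refine Finset.filter_congr fun i _ => ?_
      simp only [not_lt, iff_iff_implies_and_implies]
      exact ⟨fun h => le_of_lt h, fun h => lt_of_le_of_ne h (hev_ne i)⟩]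
    rw [Finset.card_filter_add_card_filter_not]
    exact Fintype.card_fin n
  -- dimension bookkeeping
  have hrange_le : LinearMap.range Q ≤ LinearMap.ker Q := by
    rintro _ ⟨u, rfl⟩
    exact LinearMap.congr_fun hQ2 u
  have hcomap : Module.finrank ℂ ((LinearMap.range Q).comap (LinearMap.ker Q).subtype)
      = Module.finrank ℂ (LinearMap.range Q) :=
    (Submodule.comapSubtypeEquivOfLe hrange_le).finrank_eq
  have hquot := Submodule.finrank_quotient_add_finrank
    ((LinearMap.range Q).comap (LinearMap.ker Q).subtype)
  have hrn := LinearMap.finrank_range_add_finrank_ker Q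
  set r := Module.finrank ℂ (LinearMap.range Q) with hr
  set h := Module.finrank ℂ
    (↥(LinearMap.ker Q) ⧸ (LinearMap.range Q).comap (LinearMap.ker Q).subtype) with hh
  -- q = r
  have hq_eq : (Finset.univ.filter fun i => ev i < 0).card = r := by
    have hs : ((Finset.univ.filter fun i => 0 < ev i).card : ℤ)
        - ((Finset.univ.filter fun i => ev i < 0).card : ℤ) = (h : ℤ) := hsig
    rw [hdimV] at hrn
    rw [hcomap] at hquot
    omega
  -- the eigenvector family
  set w : Fin n → V := fun k => bV.equivFun.symm (fun i => U i k) with hw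
  have hUunit : IsUnit U := (Unitary.toUnits hGV.eigenvectorUnitary).isUnit
  have hwind : LinearIndependent ℂ w := by
    have h1 : LinearIndependent ℂ fun k => (U.transpose k) :=
      Matrix.linearIndependent_cols_iff_isUnit.2 hUunit
    have h2 := h1.map' bV.equivFun.symm.toLinearMap bV.equivFun.symm.ker
    exact h2
  have hBw : ∀ k l, B (w k) (w l) = if k = l then ((ev l : ℂ)) else 0 := by
    intro k l
    have hexp : B (w k) (w l) = ∑ i, ∑ j, star (U i k) * (U j l * G i j) := by
      simp only [hw, Module.Basis.equivFun_symm_apply]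
      exact herm_sum_expand B hlin hherm Finset.univ _ _ _ _
    have hdiag : star (hGV.eigenvectorUnitary : Matrix (Fin n) (Fin n) ℂ) * G
        * (hGV.eigenvectorUnitary : Matrix (Fin n) (Fin n) ℂ)
        = Matrix.diagonal (RCLike.ofReal ∘ hGV.eigenvalues) := by
      have := hGV.conjStarAlgAut_star_eigenvectorUnitary
      rw [Unitary.conjStarAlgAut_apply] at this
      simpa using this
    have : ((star U) * G * U) k l = Matrix.diagonal (RCLike.ofReal ∘ ev) k l := by
      rw [hU, hdiag]
    rw [hexp]
    rw [Matrix.mul_apply] at this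
    simp only [Matrix.mul_apply, Matrix.star_apply, Finset.sum_mul] at this
    rw [show (∑ i, ∑ j, star (U i k) * (U j l * G i j))
        = ∑ j, ∑ i, star (U i k) * G i j * U j l by
      rw [Finset.sum_comm]; exact Finset.sum_congr rfl fun j _ =>
        Finset.sum_congr rfl fun i _ => by ring, this]
    by_cases hkl : k = l <;> simp [Matrix.diagonal_apply, hkl, RCLike.ofReal]
  -- the positive subspace
  set P : Submodule ℂ V := Submodule.span ℂ
    (Set.range fun k : {k : Fin n // 0 < ev k} => w k.1) with hP
  have hPdim : Module.finrank ℂ P = (Finset.univ.filter fun i => 0 < ev i).card := by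
    rw [hP, show (Set.range fun k : {k : Fin n // 0 < ev k} => w k.1)
        = Set.range (w ∘ (Subtype.val : {k : Fin n // 0 < ev k} → Fin n)) from rfl,
      finrank_span_eq_card (hwind.comp _ Subtype.val_injective), Fintype.card_subtype]
  have hPpos : ∀ s ∈ P, s ≠ 0 → 0 < (B s s).re := by
    intro s hs hs0
    obtain ⟨c, hc⟩ := (Submodule.mem_span_range_iff_exists_fun ℂ).1 hs
    have hBss : B s s = ∑ k : {k : Fin n // 0 < ev k},
        (star (c k) * (c k * ((ev k.1 : ℂ)))) := by
      rw [← hc, herm_sum_expand B hlin hherm Finset.univ c c _ _]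
      refine Finset.sum_congr rfl fun k _ => ?_
      rw [Finset.sum_eq_single k]
      · rw [hBw]; simp
      · intro l _ hlk
        rw [hBw]
        rw [if_neg fun hkl => hlk (Subtype.ext hkl.symm)]
        ring
      · simp
    have hre : (B s s).re = ∑ k : {k : Fin n // 0 < ev k},
        Complex.normSq (c k) * ev k.1 := by
      rw [hBss, Complex.re_sum]
      refine Finset.sum_congr rfl fun k _ => ?_
      rw [← mul_assoc, show star (c k) * c k = ((Complex.normSq (c k) : ℝ) : ℂ) by
        rw [Complex.star_def, mul_comm, Complex.mul_conj]]
      rw [← Complex.ofReal_mul, Complex.ofReal_re]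
    have hcne : c ≠ 0 := by
      intro h0
      apply hs0
      rw [← hc, h0]
      simp
    obtain ⟨k0, hk0⟩ := Function.ne_iff.1 hcne
    rw [hre]
    refine Finset.sum_pos' (fun k _ => mul_nonneg (Complex.normSq_nonneg _) k.2.le)
      ⟨k0, Finset.mem_univ _, mul_pos (Complex.normSq_pos.2 (by simpa using hk0)) k0.2⟩
  -- helpers for bilinearity
  have hB0 : ∀ x : V, B x 0 = 0 := fun x => (hlin x).map_zero
  have hadd2 : ∀ x a b : V, B x (a + b) = B x a + B x b := fun x => (hlin x).map_add
  have hsmul2 : ∀ (x : V) (c : ℂ) (a : V), B x (c • a) = c * B x a := by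
    intro x c a
    rw [(hlin x).map_smul]
    simp
  have hadd1 : ∀ a b z : V, B (a + b) z = B a z + B b z := by
    intro a b z
    rw [hherm, hadd2, star_add, ← hherm, ← hherm]
  have hsmul1 : ∀ (c : ℂ) (a z : V), B (c • a) z = star c * B a z := by
    intro c a z
    rw [hherm, hsmul2, star_mul', ← hherm]
  have hQQ : ∀ u : V, Q (Q u) = 0 := fun u => LinearMap.congr_fun hQ2 u
  -- main argument
  intro x hx
  obtain ⟨y, rfl⟩ := Submodule.Quotient.mk_surjective _ x
  have hyreal : ((B (y:V) (y:V)).re : ℂ) = B (y:V) (y:V) :=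
    Complex.conj_eq_iff_re.1 (hherm (y:V) (y:V)).symm
  rw [hdesc]
  refine ⟨(B (y:V) (y:V)).re, ?_, hyreal.symm⟩
  by_contra hneg
  push_neg at hneg
  have hy_notin : (y:V) ∉ LinearMap.range Q := by
    intro hmem
    apply hx
    rw [Submodule.Quotient.mk_eq_zero]
    simpa using hmem
  have hy0 : (y:V) ≠ 0 := fun h0 => hy_notin (h0 ▸ Submodule.zero_mem _)
  have hQy : Q (y:V) = 0 := y.2
  set S : Submodule ℂ V := LinearMap.range Q ⊔ (ℂ ∙ (y:V)) with hS
  have hinf : LinearMap.range Q ⊓ (ℂ ∙ (y:V)) = ⊥ := by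
    rw [eq_bot_iff]
    rintro z ⟨hz1, hz2⟩
    obtain ⟨c, rfl⟩ := Submodule.mem_span_singleton.1 hz2
    rcases eq_or_ne c 0 with rfl | hc
    · simp
    · exact absurd (by
        have : (y:V) = c⁻¹ • (c • (y:V)) := by rw [smul_smul, inv_mul_cancel₀ hc, one_smul]
        rw [this]
        exact Submodule.smul_mem _ _ hz1) hy_notin
  have hSdim : Module.finrank ℂ S = r + 1 := by
    have hsi := Submodule.finrank_sup_add_finrank_inf_eq (LinearMap.range Q) (ℂ ∙ (y:V))
    rw [hinf, finrank_bot, add_zero, finrank_span_singleton hy0] at hsi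
    rw [hS, hsi, hr]
  have hSneg : ∀ s ∈ S, (B s s).re ≤ 0 := by
    intro s hs
    obtain ⟨a, ha, b, hb, rfl⟩ := Submodule.mem_sup.1 hs
    obtain ⟨u, rfl⟩ := ha
    obtain ⟨c, rfl⟩ := Submodule.mem_span_singleton.1 hb
    have e1 : B (Q u) (Q u) = 0 := by rw [hselfadj, hQQ, hB0]
    have e2 : B (Q u) (c • (y:V)) = 0 := by rw [hsmul2, hselfadj, hQy, hB0, mul_zero]
    have e3 : B (c • (y:V)) (Q u) = 0 := by rw [hherm, e2, star_zero]
    rw [hadd1, hadd2, hadd2, e1, e2, e3]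
    simp only [zero_add, add_zero]
    rw [hsmul1, hsmul2, ← mul_assoc, show star c * c = ((Complex.normSq c : ℝ) : ℂ) by
      rw [Complex.star_def, mul_comm, Complex.mul_conj]]
    rw [← hyreal, ← Complex.ofReal_mul, Complex.ofReal_re]
    exact mul_nonpos_of_nonneg_of_nonpos (Complex.normSq_nonneg _) hneg
  have hSP : S ⊓ P = ⊥ := by
    rw [eq_bot_iff]
    rintro z ⟨hz1, hz2⟩
    rw [Submodule.mem_bot]
    by_contra hz0
    exact absurd (hPpos z hz2 hz0) (not_lt.2 (hSneg z hz1))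
  have hsum := Submodule.finrank_sup_add_finrank_inf_eq S P
  rw [hSP, finrank_bot, add_zero, hSdim, hPdim] at hsum
  have hle : Module.finrank ℂ ↥(S ⊔ P) ≤ n := hdimV ▸ Submodule.finrank_le _
  rw [hdimV] at hrn
  rw [hcomap] at hquot
  omega
end
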